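/- arXiv:1411.1980 — 4 statements merged into one kernel-verified Lean document; each statement's English description precedes it below -/
import Mathlib

section
/- For the viscous MG multiplier symbols, there exists a constant C depending only on N and ε_ν > 0 such that for all k ∈ ℤ³ with k₃ ≠ 0 and for each j ∈ {1,2,3}, |M̂ⱼ(k)| ≤ C |k|⁻². -/
/-!
Write `s = |k|²` and `B = k₂² + ε_ν s²`, so that `D = N⁴ s k₃² + B²`. Every symbol is bounded
by `N² s / B`: the parts of the numerators carrying a factor `B` are controlled by `D ≥ B²`, and
the remaining term `N⁴ kᵢ k₃ s` (i = 2 for `M̂₁`, i = 1 for `M̂₂`) by the AM–GM bound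
`D ≥ N⁴ kᵢ² k₃² + B² ≥ 2 N² |kᵢ k₃| B`.
Since `B ≥ ε_ν s²`, this is at most `(N² / ε_ν) / s`.
-/

noncomputable section

/-- `|k|² = k₁² + k₂² + k₃²` as a real number. -/
def normSq (k1 k2 k3 : ℤ) : ℝ := (k1 : ℝ) ^ 2 + (k2 : ℝ) ^ 2 + (k3 : ℝ) ^ 2

/-- Denominator `D(k) = N⁴|k|²k₃² + (ε_ν|k|⁴ + k₂²)²`. -/
def Dsym (N εν : ℝ) (k1 k2 k3 : ℤ) : ℝ :=
  N ^ 4 * normSq k1 k2 k3 * (k3 : ℝ) ^ 2 + (εν * (normSq k1 k2 k3) ^ 2 + (k2 : ℝ) ^ 2) ^ 2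

/-- `M̂₁(k)`. -/
def Msym1 (N εν : ℝ) (k1 k2 k3 : ℤ) : ℝ :=
  (N ^ 4 * (k2 : ℝ) * (k3 : ℝ) * normSq k1 k2 k3 -
    N ^ 2 * (k1 : ℝ) * (k3 : ℝ) * ((k2 : ℝ) ^ 2 + εν * (normSq k1 k2 k3) ^ 2)) /
    Dsym N εν k1 k2 k3

/-- `M̂₂(k)`. -/
def Msym2 (N εν : ℝ) (k1 k2 k3 : ℤ) : ℝ :=
  (-(N ^ 4) * (k1 : ℝ) * (k3 : ℝ) * normSq k1 k2 k3 -
    N ^ 2 * (k2 : ℝ) * (k3 : ℝ) * ((k2 : ℝ) ^ 2 + εν * (normSq k1 k2 k3) ^ 2)) /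
    Dsym N εν k1 k2 k3

/-- `M̂₃(k)`. -/
def Msym3 (N εν : ℝ) (k1 k2 k3 : ℤ) : ℝ :=
  (N ^ 2 * ((k1 : ℝ) ^ 2 + (k2 : ℝ) ^ 2) * ((k2 : ℝ) ^ 2 + εν * (normSq k1 k2 k3) ^ 2)) /
    Dsym N εν k1 k2 k3


section RealBounds

variable {N s B x y z : ℝ}

lemma abs_cross_num_mul_le (hB : 0 ≤ B) (hy : y ^ 2 ≤ s) (hxz : 2 * |x| * |z| ≤ s) :
    |N ^ 4 * y * z * s - N ^ 2 * x * z * B| * B ≤ N ^ 2 * s * (N ^ 4 * s * z ^ 2 + B ^ 2) := by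
  have hs : 0 ≤ s := (sq_nonneg y).trans hy
  have triangle : |N ^ 4 * y * z * s - N ^ 2 * x * z * B| ≤
      N ^ 2 * (N ^ 2 * |y| * |z|) * s + N ^ 2 * (|x| * |z|) * B := by
    refine (abs_sub _ _).trans (le_of_eq ?_)
    have hN2 : (0 : ℝ) ≤ N ^ 2 := by positivity
    have hN4 : (0 : ℝ) ≤ N ^ 4 := by positivity
    simp only [abs_mul, abs_of_nonneg hs, abs_of_nonneg hB, abs_of_nonneg hN2, abs_of_nonneg hN4]
    ring
  have amgm := two_mul_le_add_sq (N ^ 2 * |y| * |z|) B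
  have hyz : (N ^ 2 * |y| * |z|) ^ 2 ≤ N ^ 4 * s * z ^ 2 := by
    calc (N ^ 2 * |y| * |z|) ^ 2 = N ^ 4 * y ^ 2 * z ^ 2 := by
          rw [mul_pow, mul_pow, sq_abs, sq_abs]; ring
      _ ≤ N ^ 4 * s * z ^ 2 := by gcongr
  calc |N ^ 4 * y * z * s - N ^ 2 * x * z * B| * B
      ≤ (N ^ 2 * (N ^ 2 * |y| * |z|) * s + N ^ 2 * (|x| * |z|) * B) * B := by gcongr
    _ = N ^ 2 * s * (2 * (N ^ 2 * |y| * |z|) * B) / 2 + N ^ 2 * (2 * |x| * |z|) * B ^ 2 / 2 := by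
      ring
    _ ≤ N ^ 2 * s * (N ^ 4 * s * z ^ 2 + B ^ 2) / 2 + N ^ 2 * s * B ^ 2 / 2 := by
      gcongr
      exact amgm.trans (by gcongr)
    _ ≤ N ^ 2 * s * (N ^ 4 * s * z ^ 2 + B ^ 2) := by
      have : 0 ≤ N ^ 2 * s * (N ^ 4 * s * z ^ 2) := by positivity
      nlinarith

lemma planar_num_mul_le (hxy : x ^ 2 + y ^ 2 ≤ s) :
    N ^ 2 * (x ^ 2 + y ^ 2) * B * B ≤ N ^ 2 * s * (N ^ 4 * s * z ^ 2 + B ^ 2) := by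
  have hs : 0 ≤ s := (by positivity : (0 : ℝ) ≤ x ^ 2 + y ^ 2).trans hxy
  calc N ^ 2 * (x ^ 2 + y ^ 2) * B * B ≤ N ^ 2 * s * B ^ 2 := by
        rw [mul_assoc _ B B, ← sq]
        gcongr
    _ ≤ N ^ 2 * s * (N ^ 4 * s * z ^ 2 + B ^ 2) := by
      gcongr
      exact le_add_of_nonneg_left (by positivity)

lemma two_mul_abs_mul_abs_le_add_sq (a b : ℝ) : 2 * |a| * |b| ≤ a ^ 2 + b ^ 2 := by
  simpa only [sq_abs] using two_mul_le_add_sq |a| |b|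

end RealBounds

lemma abs_div_le_div_of_abs_mul_le {a b c d : ℝ} (hb : 0 < b) (hd : 0 < d) (h : |a| * d ≤ c * b) :
    |a / b| ≤ c / d := by
  rwa [abs_div, abs_of_pos hb, div_le_div_iff₀ hb hd]

lemma mul_div_le_div_div_of_mul_sq_le {c ε s B : ℝ} (hc : 0 ≤ c) (hε : 0 < ε) (hs : 0 < s)
    (hB : ε * s ^ 2 ≤ B) : c * s / B ≤ c / ε / s := by
  calc c * s / B ≤ c * s / (ε * s ^ 2) := by gcongr
    _ = c / ε / s := by field_simp

def Bsym (εν : ℝ) (k1 k2 k3 : ℤ) : ℝ := (k2 : ℝ) ^ 2 + εν * normSq k1 k2 k3 ^ 2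

section Symbols

variable {N εν : ℝ} {k1 k2 k3 : ℤ}

lemma normSq_pos (k1 k2 : ℤ) (hk3 : k3 ≠ 0) : 0 < normSq k1 k2 k3 := by
  have : (k3 : ℝ) ≠ 0 := Int.cast_ne_zero.mpr hk3
  unfold normSq
  positivity

lemma Dsym_eq (N εν : ℝ) (k1 k2 k3 : ℤ) :
    Dsym N εν k1 k2 k3 = N ^ 4 * normSq k1 k2 k3 * (k3 : ℝ) ^ 2 + Bsym εν k1 k2 k3 ^ 2 := by
  rw [Dsym, Bsym, add_comm (εν * _)]

lemma Bsym_pos (hεν : 0 < εν) (hs : 0 < normSq k1 k2 k3) : 0 < Bsym εν k1 k2 k3 := by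
  unfold Bsym
  positivity

lemma Dsym_pos (hεν : 0 < εν) (hs : 0 < normSq k1 k2 k3) : 0 < Dsym N εν k1 k2 k3 := by
  have := Bsym_pos hεν hs
  rw [Dsym_eq]
  positivity

lemma abs_Msym1_le (hεν : 0 < εν) (hs : 0 < normSq k1 k2 k3) :
    |Msym1 N εν k1 k2 k3| ≤ N ^ 2 * normSq k1 k2 k3 / Bsym εν k1 k2 k3 := by
  have hB := Bsym_pos hεν hs
  refine abs_div_le_div_of_abs_mul_le (Dsym_pos hεν hs) hB ?_
  rw [Dsym_eq]
  have := two_mul_abs_mul_abs_le_add_sq (k1 : ℝ) k3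
  unfold normSq at this ⊢
  exact abs_cross_num_mul_le hB.le (by linarith [sq_nonneg (k1 : ℝ), sq_nonneg (k3 : ℝ)])
    (by linarith [sq_nonneg (k2 : ℝ)])

lemma abs_Msym2_le (hεν : 0 < εν) (hs : 0 < normSq k1 k2 k3) :
    |Msym2 N εν k1 k2 k3| ≤ N ^ 2 * normSq k1 k2 k3 / Bsym εν k1 k2 k3 := by
  have hB := Bsym_pos hεν hs
  have hM : Msym2 N εν k1 k2 k3 = (N ^ 4 * (-k1 : ℝ) * k3 * normSq k1 k2 k3 -
      N ^ 2 * k2 * k3 * Bsym εν k1 k2 k3) / Dsym N εν k1 k2 k3 := by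
    rw [Msym2, Bsym]
    ring
  rw [hM]
  refine abs_div_le_div_of_abs_mul_le (Dsym_pos hεν hs) hB ?_
  rw [Dsym_eq]
  have := two_mul_abs_mul_abs_le_add_sq (k2 : ℝ) k3
  unfold normSq at this ⊢
  exact abs_cross_num_mul_le hB.le (by linarith [sq_nonneg (k2 : ℝ), sq_nonneg (k3 : ℝ)])
    (by linarith [sq_nonneg (k1 : ℝ)])

lemma abs_Msym3_le (hεν : 0 < εν) (hs : 0 < normSq k1 k2 k3) :
    |Msym3 N εν k1 k2 k3| ≤ N ^ 2 * normSq k1 k2 k3 / Bsym εν k1 k2 k3 := by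
  have hB := Bsym_pos hεν hs
  refine abs_div_le_div_of_abs_mul_le (Dsym_pos hεν hs) hB ?_
  rw [Dsym_eq, abs_of_nonneg (by positivity)]
  refine planar_num_mul_le ?_
  unfold normSq
  linarith [sq_nonneg (k3 : ℝ)]

end Symbols

/-- For the viscous MG multiplier symbols, there is a constant `C`
depending only on `N` and `ε_ν > 0` such that for all `k ∈ ℤ³` with `k₃ ≠ 0` and each
`j ∈ {1,2,3}`, `|M̂ⱼ(k)| ≤ C|k|⁻²`. -/
theorem stmt1 (N εν : ℝ) (hN : 0 < N) (hεν : 0 < εν) :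
    ∃ C : ℝ, 0 < C ∧ ∀ k1 k2 k3 : ℤ, k3 ≠ 0 →
      |Msym1 N εν k1 k2 k3| ≤ C / normSq k1 k2 k3 ∧
      |Msym2 N εν k1 k2 k3| ≤ C / normSq k1 k2 k3 ∧
      |Msym3 N εν k1 k2 k3| ≤ C / normSq k1 k2 k3 := by
  refine ⟨N ^ 2 / εν, by positivity, fun k1 k2 k3 hk3 => ?_⟩
  have hs := normSq_pos k1 k2 hk3
  have hB : εν * normSq k1 k2 k3 ^ 2 ≤ Bsym εν k1 k2 k3 := le_add_of_nonneg_left (sq_nonneg _)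
  have decay := mul_div_le_div_div_of_mul_sq_le (sq_nonneg N) hεν hs hB
  exact ⟨(abs_Msym1_le hεν hs).trans decay, (abs_Msym2_le hεν hs).trans decay,
    (abs_Msym3_le hεν hs).trans decay⟩
end
end

section
/- For the inviscid MG symbols (ε_ν = 0), there exists a constant C depending only on N such that |M̂ⱼ(k)| ≤ C|k| for all k ∈ ℤ³ with k₃ ≠ 0 and each j ∈ {1,2,3}. -/
noncomputable section

set_option maxHeartbeats 1000000 in

lemma mg_core (N a b c : ℝ) (hN : 0 < N) (hc : 1 ≤ c ^ 2) :
    |N ^ 4 * b * c * (a ^ 2 + b ^ 2 + c ^ 2) - N ^ 2 * a * c * b ^ 2| ≤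
      2 * Real.sqrt (a ^ 2 + b ^ 2 + c ^ 2) *
        (N ^ 4 * (a ^ 2 + b ^ 2 + c ^ 2) * c ^ 2 + (b ^ 2) ^ 2) ∧
    |(-(N ^ 4)) * a * c * (a ^ 2 + b ^ 2 + c ^ 2) - N ^ 2 * b * c * b ^ 2| ≤
      2 * Real.sqrt (a ^ 2 + b ^ 2 + c ^ 2) *
        (N ^ 4 * (a ^ 2 + b ^ 2 + c ^ 2) * c ^ 2 + (b ^ 2) ^ 2) ∧
    |N ^ 2 * (a ^ 2 + b ^ 2) * b ^ 2| ≤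
      2 * Real.sqrt (a ^ 2 + b ^ 2 + c ^ 2) *
        (N ^ 4 * (a ^ 2 + b ^ 2 + c ^ 2) * c ^ 2 + (b ^ 2) ^ 2) := by
  have hs0 : (0:ℝ) ≤ a ^ 2 + b ^ 2 + c ^ 2 := by positivity
  set t : ℝ := Real.sqrt (a ^ 2 + b ^ 2 + c ^ 2) with htdef
  have ht0 : 0 ≤ t := Real.sqrt_nonneg _
  have ht2 : t ^ 2 = a ^ 2 + b ^ 2 + c ^ 2 := Real.sq_sqrt hs0
  have h1t : 1 ≤ t := by nlinarith [sq_nonneg (t - 1), sq_nonneg a, sq_nonneg b]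
  have ha : a ^ 2 ≤ t ^ 2 := by nlinarith [sq_nonneg b, sq_nonneg c]
  have hb : b ^ 2 ≤ t ^ 2 := by nlinarith [sq_nonneg a, sq_nonneg c]
  have hD0 : (0:ℝ) ≤ N ^ 4 * (a ^ 2 + b ^ 2 + c ^ 2) * c ^ 2 + (b ^ 2) ^ 2 := by positivity
  -- x*c bounds
  have keyc : ∀ x : ℝ, x ^ 2 ≤ t ^ 2 → x * c ≤ t * c ^ 2 ∧ -(x * c) ≤ t * c ^ 2 := by
    intro x hx
    constructor <;>
      nlinarith [sq_nonneg (t * c - x), sq_nonneg (t * c + x),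
        mul_nonneg (sub_nonneg.2 hx) (sub_nonneg.2 hc), h1t, ht0]
  -- AM-GM bounds
  have keyg : ∀ x : ℝ, x ^ 2 ≤ t ^ 2 →
      2 * N ^ 2 * x * c * b ^ 2 ≤ N ^ 4 * (a ^ 2 + b ^ 2 + c ^ 2) * c ^ 2 + (b ^ 2) ^ 2 ∧
      -(2 * N ^ 2 * x * c * b ^ 2) ≤ N ^ 4 * (a ^ 2 + b ^ 2 + c ^ 2) * c ^ 2 + (b ^ 2) ^ 2 := by
    intro x hx
    constructor <;>
      nlinarith [sq_nonneg (N ^ 2 * x * c - b ^ 2), sq_nonneg (N ^ 2 * x * c + b ^ 2),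
        mul_nonneg (sq_nonneg (N ^ 2 * c)) (sub_nonneg.2 hx), ht2]
  obtain ⟨hbc, hbc'⟩ := keyc b hb
  obtain ⟨hac, hac'⟩ := keyc a ha
  obtain ⟨hga, hga'⟩ := keyg a ha
  obtain ⟨hgb, hgb'⟩ := keyg b hb
  have hbcs : N ^ 4 * (a ^ 2 + b ^ 2 + c ^ 2) * (b * c) ≤
      N ^ 4 * (a ^ 2 + b ^ 2 + c ^ 2) * (t * c ^ 2) :=
    mul_le_mul_of_nonneg_left hbc (by positivity)
  have hbcs' : N ^ 4 * (a ^ 2 + b ^ 2 + c ^ 2) * (-(b * c)) ≤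
      N ^ 4 * (a ^ 2 + b ^ 2 + c ^ 2) * (t * c ^ 2) :=
    mul_le_mul_of_nonneg_left hbc' (by positivity)
  have hacs : N ^ 4 * (a ^ 2 + b ^ 2 + c ^ 2) * (a * c) ≤
      N ^ 4 * (a ^ 2 + b ^ 2 + c ^ 2) * (t * c ^ 2) :=
    mul_le_mul_of_nonneg_left hac (by positivity)
  have hacs' : N ^ 4 * (a ^ 2 + b ^ 2 + c ^ 2) * (-(a * c)) ≤
      N ^ 4 * (a ^ 2 + b ^ 2 + c ^ 2) * (t * c ^ 2) :=
    mul_le_mul_of_nonneg_left hac' (by positivity)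
  have hC : (0:ℝ) ≤ t * (b ^ 2) ^ 2 := by positivity
  have hE : (0:ℝ) ≤ (t - 1) * (N ^ 4 * (a ^ 2 + b ^ 2 + c ^ 2) * c ^ 2 + (b ^ 2) ^ 2) :=
    mul_nonneg (by linarith) hD0
  have htD : (0:ℝ) ≤ t * (N ^ 4 * (a ^ 2 + b ^ 2 + c ^ 2) * c ^ 2 + (b ^ 2) ^ 2) :=
    mul_nonneg ht0 hD0
  refine ⟨abs_le.2 ⟨?_, ?_⟩, abs_le.2 ⟨?_, ?_⟩, abs_le.2 ⟨?_, ?_⟩⟩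
  · linarith [hbcs', hga, hC, hE, hD0]
  · linarith [hbcs, hga', hC, hE, hD0]
  · linarith [hacs, hgb, hC, hE, hD0]
  · linarith [hacs', hgb', hC, hE, hD0]
  · linarith [htD, mul_nonneg (mul_nonneg (sq_nonneg N)
      (by positivity : (0:ℝ) ≤ a ^ 2 + b ^ 2)) (sq_nonneg b)]
  · have ht3 : N ^ 4 * t ^ 3 * c ^ 2 = t * (N ^ 4 * (a ^ 2 + b ^ 2 + c ^ 2) * c ^ 2) := by
      linear_combination (N ^ 4 * t * c ^ 2) * ht2
    have hHs : N ^ 2 * t ^ 2 * b ^ 2 = N ^ 2 * (a ^ 2 + b ^ 2 + c ^ 2) * b ^ 2 := by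
      linear_combination (N ^ 2 * b ^ 2) * ht2
    have hG1 : (0:ℝ) ≤ t * (N ^ 4 * t ^ 2) * (c ^ 2 - 1) := by
      have : (0:ℝ) ≤ c ^ 2 - 1 := by linarith
      positivity
    have hG2 : (0:ℝ) ≤ t * (N ^ 2 * t - b ^ 2) ^ 2 := by positivity
    have hG3 : (0:ℝ) ≤ N ^ 2 * b ^ 2 * c ^ 2 := by positivity
    linarith [ht3, hHs, hG1, hG2, hG3, hC]

/-- For the inviscid MG symbols (`ε_ν = 0`), there exists a constant `C`
depending only on `N` such that `|M̂ⱼ(k)| ≤ C|k|` for all `k ∈ ℤ³` with `k₃ ≠ 0` and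
each `j ∈ {1,2,3}`. -/
theorem stmt3 (N : ℝ) (hN : 0 < N) :
    ∃ C : ℝ, 0 < C ∧ ∀ k1 k2 k3 : ℤ, k3 ≠ 0 →
      |Msym1 N 0 k1 k2 k3| ≤ C * Real.sqrt (normSq k1 k2 k3) ∧
      |Msym2 N 0 k1 k2 k3| ≤ C * Real.sqrt (normSq k1 k2 k3) ∧
      |Msym3 N 0 k1 k2 k3| ≤ C * Real.sqrt (normSq k1 k2 k3) := by
  refine ⟨2, two_pos, ?_⟩
  intro k1 k2 k3 hk3
  have hzc : (1 : ℤ) ≤ k3 ^ 2 := by rcases hk3.lt_or_gt with h | h <;> nlinarith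
  have hc : (1 : ℝ) ≤ ((k3 : ℝ)) ^ 2 := by exact_mod_cast hzc
  set a : ℝ := (k1 : ℝ)
  set b : ℝ := (k2 : ℝ)
  set c : ℝ := (k3 : ℝ)
  obtain ⟨H1, H2, H3⟩ := mg_core N a b c hN hc
  have hspos : (0 : ℝ) < a ^ 2 + b ^ 2 + c ^ 2 := by nlinarith [sq_nonneg a, sq_nonneg b]
  have hD : (0 : ℝ) < N ^ 4 * (a ^ 2 + b ^ 2 + c ^ 2) * c ^ 2 + (b ^ 2) ^ 2 := by
    have h1 : (0 : ℝ) < N ^ 4 * (a ^ 2 + b ^ 2 + c ^ 2) * c ^ 2 := by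
      have hc0 : (0 : ℝ) < c ^ 2 := by linarith
      positivity
    nlinarith [sq_nonneg (b ^ 2)]
  simp only [Msym1, Msym2, Msym3, Dsym, normSq, zero_mul, zero_add, add_zero, mul_zero]
  rw [abs_div, abs_div, abs_div, abs_of_pos hD, div_le_iff₀ hD, div_le_iff₀ hD, div_le_iff₀ hD]
  exact ⟨H1, H2, H3⟩
end
end

section
/- Along the parabolic curves k₁ = k₂² with k₃ = 1 and ε_ν = 0, the third MG symbol is unbounded: M̂₃(k₂², k₂, 1) → ∞ as k₂ → ∞. More precisely, M̂₃(k₂², k₂, 1) ≥ c·|k₂|² for all sufficiently large k₂, for some constant c > 0 depending only on N. -/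
noncomputable section

/-- Along the parabolic curves `k₁ = k₂²`, `k₃ = 1`, with `ε_ν = 0`, the
third MG symbol is unbounded: there are `c > 0` (depending only on `N`) and a threshold
`K` such that `M̂₃(k₂², k₂, 1) ≥ c·k₂²` for all integers `k₂ ≥ K`. -/
theorem stmt4 (N : ℝ) (hN : 0 < N) :
    ∃ c : ℝ, 0 < c ∧ ∃ K : ℤ, ∀ k2 : ℤ, K ≤ k2 →
      c * (k2 : ℝ) ^ 2 ≤ Msym3 N 0 (k2 ^ 2) k2 1 := by
  refine ⟨N ^ 2 / (3 * (N ^ 4 + 1)), by positivity, 1, fun k2 hk => ?_⟩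
  have hx : (1 : ℝ) ≤ (k2 : ℝ) := by exact_mod_cast hk
  set x : ℝ := (k2 : ℝ)
  have hD : Dsym N 0 (k2 ^ 2) k2 1 = N ^ 4 * (x ^ 4 + x ^ 2 + 1) + x ^ 4 := by
    simp [Dsym, normSq]; push_cast; ring
  have hDpos : 0 < Dsym N 0 (k2 ^ 2) k2 1 := by
    rw [hD]; positivity
  rw [Msym3, le_div_iff₀ hDpos, div_mul_eq_mul_div, div_mul_eq_mul_div, div_le_iff₀ (by positivity : (0:ℝ) < 3 * (N ^ 4 + 1)), hD]
  have h4 : (1:ℝ) ≤ x ^ 4 := one_le_pow₀ hx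
  have h2 : (1:ℝ) ≤ x ^ 2 := one_le_pow₀ hx
  have key : N ^ 4 * (x ^ 4 + x ^ 2 + 1) + x ^ 4 ≤ 3 * (N ^ 4 + 1) * (x ^ 4 + x ^ 2) := by
    nlinarith [sq_nonneg (N ^ 2), mul_le_mul_of_nonneg_left h4 (by positivity : (0:ℝ) ≤ N ^ 4)]
  have hnn : (0:ℝ) ≤ N ^ 2 * x ^ 2 := by positivity
  push_cast
  simp only [zero_mul, add_zero]
  nlinarith [mul_le_mul_of_nonneg_left key hnn]
end
end

section
/- Define F(k₁,k₂) = (AmN²/2)·(k₁²+k₂²)k₂²/(4N⁴m²(k₁²+k₂²+4m²)+k₂⁴) − ε_κ(k₁²+k₂²+4m²) for real k₁,k₂. At k₁ = 1/ε_κ, k₂ = 1/ε_κ^{1/2}, there exist constants C₁, C₁' > 0 depending only on m and N such that F ≥ (A C₁ − 1)/ε_κ for all sufficiently small ε_κ > 0; in particular F > 0 whenever A > 1/C₁. -/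
set_option maxHeartbeats 800000


noncomputable section

/-- The lower-bound function `F(k₁,k₂)` of Case (ii), Section 7. -/
def Fbound (A m N εκ k1 k2 : ℝ) : ℝ :=
  (A * m * N ^ 2 / 2) * ((k1 ^ 2 + k2 ^ 2) * k2 ^ 2) /
    (4 * N ^ 4 * m ^ 2 * (k1 ^ 2 + k2 ^ 2 + 4 * m ^ 2) + k2 ^ 4) -
  εκ * (k1 ^ 2 + k2 ^ 2 + 4 * m ^ 2)

private lemma aux_div (x d c : ℝ) (hd : d ≠ 0) (hc : c ≠ 0) :
    (x / 2) * c ^ 3 / (d * c ^ 2) = (x / (2 * d)) * c := by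
  field_simp

/-- at `k₁ = 1/ε_κ`, `k₂ = ε_κ^{−1/2}`, there is a constant `C₁ > 0`
depending only on `m` and `N` such that `F ≥ (A C₁ − 1)/ε_κ` for all sufficiently small
`ε_κ > 0`; in particular `F > 0` whenever `A > 1/C₁`. -/
theorem stmt19 (m N : ℝ) (hm : 1 ≤ m) (hN : 0 < N) :
    ∃ C₁ : ℝ, 0 < C₁ ∧ ∀ A : ℝ, 0 < A → ∃ ε₀ : ℝ, 0 < ε₀ ∧
      ∀ εκ : ℝ, 0 < εκ → εκ < ε₀ →
        (A * C₁ - 1) / εκ ≤ Fbound A m N εκ εκ⁻¹ (εκ ^ (-(1 : ℝ) / 2)) ∧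
        (1 / C₁ < A → 0 < Fbound A m N εκ εκ⁻¹ (εκ ^ (-(1 : ℝ) / 2))) := by
  have hm0 : (0:ℝ) < m := lt_of_lt_of_le one_pos hm
  set D₀ : ℝ := 12 * N ^ 4 * m ^ 2 + 1 with hD₀def
  have hD₀ : 0 < D₀ := by positivity
  clear_value D₀
  refine ⟨m * N ^ 2 / (4 * D₀), by positivity, ?_⟩
  intro A hA
  set C₁ : ℝ := m * N ^ 2 / (4 * D₀) with hC₁def
  have hC₁ : 0 < C₁ := by positivity
  clear_value C₁
  refine ⟨min (min 1 (1 / (2 * m))) (A * C₁ / (1 + 4 * m ^ 2)), by positivity, ?_⟩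
  intro t ht htε
  have ht1 : t < 1 := lt_of_lt_of_le htε (le_trans (min_le_left _ _) (min_le_left _ _))
  have ht2 : t < 1 / (2 * m) :=
    lt_of_lt_of_le htε (le_trans (min_le_left _ _) (min_le_right _ _))
  have ht3 : t ≤ A * C₁ / (1 + 4 * m ^ 2) := le_of_lt (lt_of_lt_of_le htε (min_le_right _ _))
  set u : ℝ := t⁻¹ with hudef
  have hu : 0 < u := inv_pos.mpr ht
  have htu : t * u = 1 := mul_inv_cancel₀ (ne_of_gt ht)
  have hu1 : 1 < u := (one_lt_inv₀ ht).mpr ht1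
  have hu2m : 2 * m < u := by
    have h : t * (2 * m) < 1 := (lt_div_iff₀ (by positivity)).mp ht2
    nlinarith [mul_lt_mul_of_pos_right h hu]
  -- powers of s = t ^ (-1/2)
  have hs2 : (t ^ (-(1:ℝ) / 2)) ^ 2 = u := by
    rw [← Real.rpow_natCast (t ^ (-(1:ℝ) / 2)) 2, ← Real.rpow_mul (le_of_lt ht)]
    norm_num
    exact Real.rpow_neg_one t
  have hs4 : (t ^ (-(1:ℝ) / 2)) ^ 4 = u ^ 2 := by
    have h : (t ^ (-(1:ℝ) / 2)) ^ 4 = ((t ^ (-(1:ℝ) / 2)) ^ 2) ^ 2 := by ring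
    rw [h, hs2]
  have hF : Fbound A m N t t⁻¹ (t ^ (-(1:ℝ) / 2)) =
      (A * m * N ^ 2 / 2) * ((u ^ 2 + u) * u) /
        (4 * N ^ 4 * m ^ 2 * (u ^ 2 + u + 4 * m ^ 2) + u ^ 2) -
      t * (u ^ 2 + u + 4 * m ^ 2) := by
    simp only [Fbound, hs2, hs4, hudef]
  rw [hF]
  clear_value u
  set Den : ℝ := 4 * N ^ 4 * m ^ 2 * (u ^ 2 + u + 4 * m ^ 2) + u ^ 2 with hDen
  have hDenpos : 0 < Den := by positivity
  clear_value Den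
  have h4m : 4 * m ^ 2 ≤ u ^ 2 := by nlinarith
  have huu : u ≤ u ^ 2 := by nlinarith
  have hDle : Den ≤ D₀ * u ^ 2 := by
    rw [hDen, hD₀def]
    nlinarith [mul_le_mul_of_nonneg_left huu (by positivity : (0:ℝ) ≤ 4 * N ^ 4 * m ^ 2),
      mul_le_mul_of_nonneg_left h4m (by positivity : (0:ℝ) ≤ 4 * N ^ 4 * m ^ 2)]
  -- first term lower bound
  have hfirst : (A * m * N ^ 2 / (2 * D₀)) * u ≤
      (A * m * N ^ 2 / 2) * ((u ^ 2 + u) * u) / Den := by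
    have key : (A * m * N ^ 2 / 2) * u ^ 3 / (D₀ * u ^ 2) ≤
        (A * m * N ^ 2 / 2) * ((u ^ 2 + u) * u) / Den := by
      apply div_le_div₀ (by positivity) ?_ hDenpos hDle
      have hn : u ^ 3 ≤ (u ^ 2 + u) * u := by nlinarith [hu]
      exact mul_le_mul_of_nonneg_left hn (by positivity)
    have heq := aux_div (A * m * N ^ 2) D₀ u (ne_of_gt hD₀) (ne_of_gt hu)
    linarith [key, heq.symm.le]
  -- second term equality
  have hsecond : t * (u ^ 2 + u + 4 * m ^ 2) = u + 1 + 4 * m ^ 2 * t := by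
    have h : t * (u ^ 2 + u + 4 * m ^ 2) = (t * u) * u + (t * u) + 4 * m ^ 2 * t := by ring
    rw [h, htu]; ring
  -- key smallness: 1 + 4 m² t ≤ A C₁ u
  have hsmall : 1 + 4 * m ^ 2 * t ≤ A * C₁ * u := by
    have h1 : t * (1 + 4 * m ^ 2) ≤ A * C₁ :=
      (le_div_iff₀ (by positivity : (0:ℝ) < 1 + 4 * m ^ 2)).mp ht3
    have h2 := mul_le_mul_of_nonneg_right h1 (le_of_lt hu)
    have h3 : 1 + 4 * m ^ 2 ≤ A * C₁ * u := by nlinarith [h2, htu]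
    nlinarith [h3, sq_nonneg m, ht1]
  have hACrel : A * m * N ^ 2 / (2 * D₀) = 2 * (A * C₁) := by
    rw [hC₁def]
    field_simp
    ring
  have hdiv : (A * C₁ - 1) / t = (A * C₁ - 1) * u := by
    rw [div_eq_mul_inv, hudef]
  have hmain : (A * C₁ - 1) / t ≤
      (A * m * N ^ 2 / 2) * ((u ^ 2 + u) * u) / Den - t * (u ^ 2 + u + 4 * m ^ 2) := by
    rw [hdiv, hsecond]
    have h : (A * C₁ - 1) * u ≤ (A * m * N ^ 2 / (2 * D₀)) * u - (u + 1 + 4 * m ^ 2 * t) := by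
      rw [hACrel]; linarith [hsmall]
    linarith [hfirst]
  refine ⟨hmain, ?_⟩
  intro hAC
  have h1 : 1 < A * C₁ := by
    rw [div_lt_iff₀ hC₁] at hAC
    linarith
  have h2 : 0 < (A * C₁ - 1) / t := div_pos (by linarith) ht
  linarith
end
end
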